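/- The assignment x ↦ x, y ↦ t·x determines a well-defined ring homomorphism Δ : A → B (since (t·x)^l = x^l in B), and Δ is injective. -/

import Mathlib

/-!
Over `R = ℤ[x]` we have `A = R[y]/(y^l - x^l)`, `B = R[t]/(t^l - 1)` and `Δ` is `y ↦ x t`.
A class in `A` has a representative `p` of `y`-degree `< l`; then `p(x t)` has `t`-degree `< l`,
so it vanishes in `B` only if `p(x t) = 0`, i.e. only if every `x^i p_i` vanishes. Since `x` is a
nonzerodivisor, `p = 0`.
-/

open MvPolynomial

noncomputable section

/-- `A = ℤ[x,y]/(x^l − y^l)`, with `x = X 0`, `y = X 1`. -/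
def IA (l : ℕ) : Ideal (MvPolynomial (Fin 2) ℤ) := Ideal.span {X 0 ^ l - X 1 ^ l}

/-- `B = ℤ[x,t]/(t^l − 1)`, with `x = X 0`, `t = X 1`. -/
def IB (l : ℕ) : Ideal (MvPolynomial (Fin 2) ℤ) := Ideal.span {X 1 ^ l - 1}

abbrev Aq (l : ℕ) := MvPolynomial (Fin 2) ℤ ⧸ IA l
abbrev Bq (l : ℕ) := MvPolynomial (Fin 2) ℤ ⧸ IB l

open scoped Polynomial
open Function

section ScaleRoot

variable {R : Type*} [CommRing R]

lemma root_X_pow_sub_one_pow (n : ℕ) : AdjoinRoot.root (Polynomial.X ^ n - 1 : R[X]) ^ n = 1 := by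
  have := AdjoinRoot.eval₂_root (Polynomial.X ^ n - 1 : R[X])
  rwa [Polynomial.eval₂_sub, Polynomial.eval₂_X_pow, Polynomial.eval₂_one, sub_eq_zero]
    at this

def scaleRootHom (a : R) (n : ℕ) :
    AdjoinRoot (Polynomial.X ^ n - Polynomial.C (a ^ n)) →ₐ[R]
      AdjoinRoot (Polynomial.X ^ n - 1 : R[X]) :=
  AdjoinRoot.liftAlgHom _ (Algebra.ofId R _) (AdjoinRoot.of _ a * AdjoinRoot.root _) <| by
    rw [Polynomial.eval₂_sub, Polynomial.eval₂_X_pow, Polynomial.eval₂_C, mul_pow,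
      root_X_pow_sub_one_pow, mul_one, ← map_pow]
    exact sub_self _

lemma scaleRootHom_mk (a : R) (n : ℕ) (p : R[X]) :
    scaleRootHom a n (AdjoinRoot.mk _ p) =
      AdjoinRoot.mk _ (p.comp (Polynomial.C a * Polynomial.X)) := by
  rw [scaleRootHom, AdjoinRoot.liftAlgHom_mk, Polynomial.comp, Polynomial.hom_eval₂, map_mul,
    AdjoinRoot.mk_C, AdjoinRoot.mk_X]
  rfl

lemma natDegree_comp_C_mul_X_le (p : R[X]) (a : R) :
    (p.comp (Polynomial.C a * Polynomial.X)).natDegree ≤ p.natDegree := by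
  have hlin : (Polynomial.C a * Polynomial.X).natDegree ≤ 1 :=
    (Polynomial.natDegree_C_mul_le _ _).trans Polynomial.natDegree_X_le
  simpa using Polynomial.natDegree_comp_le.trans (Nat.mul_le_mul_left p.natDegree hlin)

theorem scaleRootHom_injective {a : R} (ha : a ∈ nonZeroDivisors R) (n : ℕ) :
    Injective (scaleRootHom a n) := by
  refine (injective_iff_map_eq_zero _).2 fun z hz => ?_
  obtain ⟨q, rfl⟩ := AdjoinRoot.mk_surjective z
  rcases n.eq_zero_or_pos with rfl | hn
  · rw [scaleRootHom_mk, AdjoinRoot.mk_eq_zero, pow_zero, sub_self, zero_dvd_iff,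
      Polynomial.comp_C_mul_X_eq_zero_iff ha] at hz
    rw [hz, map_zero]
  have hf : (Polynomial.X ^ n - Polynomial.C (a ^ n)).Monic :=
    Polynomial.monic_X_pow_sub_C _ hn.ne'
  have hg : (Polynomial.X ^ n - 1 : R[X]).Monic := Polynomial.monic_X_pow_sub_C 1 hn.ne'
  rw [← AdjoinRoot.mk_leftInverse hf (AdjoinRoot.mk _ q), AdjoinRoot.modByMonicHom_mk] at hz ⊢
  set p := q %ₘ (Polynomial.X ^ n - Polynomial.C (a ^ n))
  by_contra hp
  have hp0 : p ≠ 0 := by rintro h; rw [h, map_zero] at hp; exact hp rfl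
  have : Nontrivial R := Polynomial.nontrivial_iff.1 (nontrivial_of_ne p 0 hp0)
  have hpn : p.natDegree < n := by
    have := Polynomial.natDegree_lt_natDegree hp0 (Polynomial.degree_modByMonic_lt q hf)
    rwa [Polynomial.natDegree_X_pow_sub_C] at this
  rw [scaleRootHom_mk, AdjoinRoot.mk_eq_zero] at hz
  refine hg.not_dvd_of_natDegree_lt ?_ ?_ hz
  · rwa [Ne, Polynomial.comp_C_mul_X_eq_zero_iff ha]
  · calc (p.comp (Polynomial.C a * Polynomial.X)).natDegree ≤ p.natDegree :=
          natDegree_comp_C_mul_X_le p a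
      _ < n := hpn
      _ = _ := by simpa using (Polynomial.natDegree_X_pow_sub_C (n := n) (r := (1 : R))).symm

end ScaleRoot

section TwoVariables

variable (R : Type*) [CommRing R]

def finTwoEquivPolynomial : MvPolynomial (Fin 2) R ≃ₐ[R] (MvPolynomial (Fin 1) R)[X] :=
  (renameEquiv R (Equiv.swap 0 1)).trans (finSuccEquiv R 1)

lemma finTwoEquivPolynomial_X_zero : finTwoEquivPolynomial R (X 0) = Polynomial.C (X 0) := by
  rw [finTwoEquivPolynomial, AlgEquiv.trans_apply, renameEquiv_apply, rename_X,
    Equiv.swap_apply_left, show (1 : Fin 2) = Fin.succ 0 from rfl, finSuccEquiv_X_succ]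

lemma finTwoEquivPolynomial_X_one : finTwoEquivPolynomial R (X 1) = Polynomial.X := by
  rw [finTwoEquivPolynomial, AlgEquiv.trans_apply, renameEquiv_apply, rename_X,
    Equiv.swap_apply_right]
  exact finSuccEquiv_X_zero

end TwoVariables

lemma IA_map_finTwoEquivPolynomial (l : ℕ) :
    (IA l).map (finTwoEquivPolynomial ℤ) =
      Ideal.span {Polynomial.X ^ l - Polynomial.C (X 0 ^ l)} := by
  rw [IA, Ideal.map_span, Set.image_singleton, map_sub, map_pow, map_pow,
    finTwoEquivPolynomial_X_zero, finTwoEquivPolynomial_X_one, Polynomial.C_pow,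
    ← Ideal.span_singleton_neg, neg_sub]

lemma IB_map_finTwoEquivPolynomial (l : ℕ) :
    (IB l).map (finTwoEquivPolynomial ℤ) = Ideal.span {Polynomial.X ^ l - 1} := by
  rw [IB, Ideal.map_span, Set.image_singleton, map_sub, map_pow, map_one,
    finTwoEquivPolynomial_X_one]

def Aq.equivAdjoinRoot (l : ℕ) :
    Aq l ≃+*
      AdjoinRoot (Polynomial.X ^ l - Polynomial.C (X 0 ^ l) : (MvPolynomial (Fin 1) ℤ)[X]) :=
  Ideal.quotientEquiv _ _ (finTwoEquivPolynomial ℤ).toRingEquiv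
    (IA_map_finTwoEquivPolynomial l).symm

def Bq.equivAdjoinRoot (l : ℕ) :
    Bq l ≃+* AdjoinRoot (Polynomial.X ^ l - 1 : (MvPolynomial (Fin 1) ℤ)[X]) :=
  Ideal.quotientEquiv _ _ (finTwoEquivPolynomial ℤ).toRingEquiv
    (IB_map_finTwoEquivPolynomial l).symm

lemma Bq.equivAdjoinRoot_mk (l : ℕ) (p : MvPolynomial (Fin 2) ℤ) :
    Bq.equivAdjoinRoot l (Ideal.Quotient.mk _ p) = AdjoinRoot.mk _ (finTwoEquivPolynomial ℤ p) :=
  rfl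

def diagonalHom (l : ℕ) : Aq l →+* Bq l :=
  ((Bq.equivAdjoinRoot l).symm.toRingHom.comp (scaleRootHom (X 0) l).toRingHom).comp
    (Aq.equivAdjoinRoot l).toRingHom

lemma Bq.equivAdjoinRoot_diagonalHom_mk (l : ℕ) (p : MvPolynomial (Fin 2) ℤ) :
    Bq.equivAdjoinRoot l (diagonalHom l (Ideal.Quotient.mk _ p)) =
      AdjoinRoot.mk _ ((finTwoEquivPolynomial ℤ p).comp (Polynomial.C (X 0) * Polynomial.X)) := by
  simp only [diagonalHom, RingHom.comp_apply, RingEquiv.toRingHom_eq_coe, RingHom.coe_coe,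
    RingEquiv.apply_symm_apply]
  exact scaleRootHom_mk _ _ _

theorem diagonalHom_injective (l : ℕ) : Injective (diagonalHom l) :=
  (Bq.equivAdjoinRoot l).symm.injective.comp <|
    (scaleRootHom_injective (mem_nonZeroDivisors_of_ne_zero (X_ne_zero 0)) l).comp
      (Aq.equivAdjoinRoot l).injective

theorem stmt_0 (l : ℕ) :
    ∃ Δ : Aq l →+* Bq l,
      Δ (Ideal.Quotient.mk (IA l) (X 0)) = Ideal.Quotient.mk (IB l) (X 0) ∧
      Δ (Ideal.Quotient.mk (IA l) (X 1)) = Ideal.Quotient.mk (IB l) (X 1 * X 0) ∧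
      Function.Injective Δ := by
  refine ⟨diagonalHom l, ?_, ?_, diagonalHom_injective l⟩ <;>
    apply (Bq.equivAdjoinRoot l).injective
  · rw [Bq.equivAdjoinRoot_diagonalHom_mk, Bq.equivAdjoinRoot_mk, finTwoEquivPolynomial_X_zero,
      Polynomial.C_comp]
  · rw [Bq.equivAdjoinRoot_diagonalHom_mk, Bq.equivAdjoinRoot_mk, map_mul,
      finTwoEquivPolynomial_X_zero, finTwoEquivPolynomial_X_one, Polynomial.X_comp, mul_comm]
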